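/- arXiv:1912.12930 — 2 statements merged into one kernel-verified Lean document; each statement's English description precedes it below -/
import Mathlib

section
/- There is no positive definite integral ternary quadratic form that represents all seven integers 1, 2, 3, 5, 10, 14, and 15. (Combined with the representability of any six positive integers by one ternary form, this gives κ(1,3) = 6.) -/
open Matrix

/-- A positive definite integral quadratic form of rank `m`. -/
def IsPDForm {m : ℕ} (M : Matrix (Fin m) (Fin m) ℤ) : Prop :=
  M.IsSymm ∧ ∀ x : Fin m → ℤ, x ≠ 0 → 0 < x ⬝ᵥ M.mulVec x

/-- `N` is represented by `L` if `Tᵀ L T = N` for some integer matrix `T`. -/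
def Represents {n m : ℕ} (L : Matrix (Fin n) (Fin n) ℤ)
    (N : Matrix (Fin m) (Fin m) ℤ) : Prop :=
  ∃ T : Matrix (Fin n) (Fin m) ℤ, Tᵀ * L * T = N

/-- An integer `a` is represented by the form `M`. -/
def RepresentsInt {m : ℕ} (M : Matrix (Fin m) (Fin m) ℤ) (a : ℤ) : Prop :=
  ∃ x : Fin m → ℤ, x ⬝ᵥ M.mulVec x = a

/-- Two integral forms of rank `n` are isometric. -/
def IsomForm {n : ℕ} (A B : Matrix (Fin n) (Fin n) ℤ) : Prop :=
  ∃ U : Matrix (Fin n) (Fin n) ℤ, IsUnit U.det ∧ Uᵀ * A * U = B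

/-!
If `v` represents `1`, then `x ↦ x - (vᵀ M x) v` projects `ℤ³` onto the orthogonal complement of
`v`, a lattice of rank two, so `M ≅ ⟨1⟩ ⊥ f` for a positive definite binary form `f`, which may be
taken Lagrange-reduced: `f = [a, b, c]` with `0 ≤ 2b ≤ a ≤ c`. Then `a` is the minimum of `f` and
`c` its minimum off the line `y = 0`. Representing `2` forces `a ≤ 2`, and representing `3` (when
`a = 1`) or `5` (when `a = 2`) forces `c ≤ 3`, resp. `c ≤ 5`. Each of the eleven remaining forms
`⟨1⟩ ⊥ f` misses one of `5, 10, 14, 15`, which a bounded search confirms.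
-/

theorem LinearMap.finrank_ker_add_one_of_surjective {R M : Type*} [CommRing R] [IsDomain R]
    [AddCommGroup M] [Module R M] [Module.Finite R M] {f : M →ₗ[R] R}
    (hf : Function.Surjective f) : Module.finrank R (LinearMap.ker f) + 1 = Module.finrank R M := by
  rw [← (LinearMap.ker f).finrank_quotient_add_finrank,
    (f.quotKerEquivOfSurjective hf).finrank_eq, Module.finrank_self, add_comm]

theorem exists_basis_pair_ker {f : (Fin 3 → ℤ) →ₗ[ℤ] ℤ} (hf : Function.Surjective f) :
    ∃ p ∈ LinearMap.ker f, ∃ q ∈ LinearMap.ker f, LinearIndependent ℤ ![p, q] ∧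
      ∀ w ∈ LinearMap.ker f, ∃ x y : ℤ, w = x • p + y • q := by
  have hrank : Module.finrank ℤ (LinearMap.ker f) = 2 := by
    have := LinearMap.finrank_ker_add_one_of_surjective hf
    simp only [Module.finrank_fin_fun] at this
    omega
  let e := Module.finBasisOfFinrankEq ℤ (LinearMap.ker f) hrank
  refine ⟨e 0, (e 0).2, e 1, (e 1).2, ?_, fun w hw => ?_⟩
  · have h := e.linearIndependent.map' _ (LinearMap.ker f).ker_subtype
    rwa [show (LinearMap.ker f).subtype ∘ e = ![(e 0 : Fin 3 → ℤ), e 1] by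
      ext i : 1; fin_cases i <;> rfl] at h
  · have hsum := e.sum_repr ⟨w, hw⟩
    rw [Fin.sum_univ_two] at hsum
    exact ⟨_, _, congrArg Subtype.val hsum.symm⟩

def binForm (a b c x y : ℤ) : ℤ := a * x ^ 2 + 2 * b * x * y + c * y ^ 2

theorem pos_and_sub_pos_of_binForm_pos {a b c : ℤ}
    (h : ∀ x y, x ≠ 0 ∨ y ≠ 0 → 0 < binForm a b c x y) : 0 < a ∧ 0 < a * c - b ^ 2 := by
  have ha : 0 < a := by simpa [binForm] using h 1 0 (by simp)
  have hD : 0 < binForm a b c b (-a) := h b (-a) (by omega)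
  have : binForm a b c b (-a) = a * (a * c - b ^ 2) := by unfold binForm; ring
  exact ⟨ha, pos_of_mul_pos_right (this ▸ hD) ha.le⟩

section Splitting

variable {n : ℕ} {M : Matrix (Fin n) (Fin n) ℤ}

theorem dotProduct_mulVec_smul_self {v : Fin n → ℤ} (hv : v ⬝ᵥ M *ᵥ v = 1) (m : ℤ) :
    v ⬝ᵥ M *ᵥ (m • v) = m := by
  rw [mulVec_smul, dotProduct_smul, hv, smul_eq_mul, mul_one]

theorem dotProduct_mulVec_sub_smul_self {v : Fin n → ℤ} (hv : v ⬝ᵥ M *ᵥ v = 1)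
    (x : Fin n → ℤ) : v ⬝ᵥ M *ᵥ (x - (v ⬝ᵥ M *ᵥ x) • v) = 0 := by
  rw [mulVec_sub, dotProduct_sub, dotProduct_mulVec_smul_self hv, sub_self]

theorem Matrix.IsSymm.dotProduct_mulVec_comm (hM : M.IsSymm) (x y : Fin n → ℤ) :
    x ⬝ᵥ M *ᵥ y = y ⬝ᵥ M *ᵥ x := by
  rw [dotProduct_mulVec, ← mulVec_transpose, hM.eq, dotProduct_comm]

theorem Matrix.IsSymm.dotProduct_mulVec_smul_add_smul (hM : M.IsSymm) (p q : Fin n → ℤ)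
    (x y : ℤ) :
    (x • p + y • q) ⬝ᵥ M *ᵥ (x • p + y • q) =
      binForm (p ⬝ᵥ M *ᵥ p) (p ⬝ᵥ M *ᵥ q) (q ⬝ᵥ M *ᵥ q) x y := by
  simp only [mulVec_add, mulVec_smul, dotProduct_add, add_dotProduct, dotProduct_smul,
    smul_dotProduct, smul_eq_mul, hM.dotProduct_mulVec_comm q p, binForm]
  ring

theorem Matrix.IsSymm.dotProduct_mulVec_eq_sq_add (hM : M.IsSymm) {v : Fin n → ℤ}
    (hv : v ⬝ᵥ M *ᵥ v = 1) (x : Fin n → ℤ) :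
    x ⬝ᵥ M *ᵥ x = (v ⬝ᵥ M *ᵥ x) ^ 2 +
      (x - (v ⬝ᵥ M *ᵥ x) • v) ⬝ᵥ M *ᵥ (x - (v ⬝ᵥ M *ᵥ x) • v) := by
  set t := v ⬝ᵥ M *ᵥ x
  conv_lhs => rw [show x = t • v + (1 : ℤ) • (x - t • v) by simp]
  rw [hM.dotProduct_mulVec_smul_add_smul, dotProduct_mulVec_sub_smul_self hv x, hv, binForm]
  ring

end Splitting

def OnePerpRepresents (a b c n : ℤ) : Prop :=
  ∃ t x y : ℤ, t ^ 2 + binForm a b c x y = n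

theorem IsPDForm.exists_binForm_of_representsInt_one {M : Matrix (Fin 3) (Fin 3) ℤ}
    (hM : IsPDForm M) (h1 : RepresentsInt M 1) :
    ∃ a b c, 0 < a ∧ 0 < a * c - b ^ 2 ∧ ∀ n, RepresentsInt M n → OnePerpRepresents a b c n := by
  obtain ⟨hsymm, hpos⟩ := hM
  obtain ⟨v, hv⟩ := h1
  have hφ := Matrix.toLinearMap₂'_apply' M v
  have hsurj : Function.Surjective (Matrix.toLinearMap₂' ℤ M v) :=
    fun m => ⟨m • v, (hφ _).trans (dotProduct_mulVec_smul_self hv m)⟩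
  obtain ⟨p, -, q, -, hpq, hspan⟩ := exists_basis_pair_ker hsurj
  obtain ⟨ha, hD⟩ := pos_and_sub_pos_of_binForm_pos fun x y hxy => by
    rw [← hsymm.dotProduct_mulVec_smul_add_smul]
    refine hpos _ fun h0 => ?_
    have := LinearIndependent.pair_iff.1 hpq x y h0
    tauto
  refine ⟨_, _, _, ha, hD, ?_⟩
  rintro n ⟨x, rfl⟩
  obtain ⟨y, z, hyz⟩ := hspan _ ((hφ _).trans (dotProduct_mulVec_sub_smul_self hv x))
  exact ⟨v ⬝ᵥ M *ᵥ x, y, z, by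
    rw [hsymm.dotProduct_mulVec_eq_sq_add hv x, hyz, hsymm.dotProduct_mulVec_smul_add_smul]⟩

structure IsReducedBinForm (a b c : ℤ) : Prop where
  pos : 0 < a
  nonneg : 0 ≤ b
  two_mul_le : 2 * b ≤ a
  le : a ≤ c

/-- Lagrange reduction: swapping the variables lowers `a`, a shear `x ↦ x ± y` lowers `|b|`. -/
theorem exists_isReducedBinForm_of_pos (a b c : ℤ) (ha : 0 < a) (hD : 0 < a * c - b ^ 2) :
    ∃ a' b' c', IsReducedBinForm a' b' c' ∧
      ∀ x y, ∃ x' y', binForm a' b' c' x' y' = binForm a b c x y := by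
  have hc : 0 < c := by nlinarith [sq_nonneg b]
  by_cases hca : c < a
  · obtain ⟨a', b', c', hred, hval⟩ := exists_isReducedBinForm_of_pos c b a hc (by linarith)
    refine ⟨a', b', c', hred, fun x y => ?_⟩
    obtain ⟨x', y', h⟩ := hval y x
    exact ⟨x', y', h.trans (by unfold binForm; ring)⟩
  by_cases hab : a < 2 * b
  · obtain ⟨a', b', c', hred, hval⟩ :=
      exists_isReducedBinForm_of_pos a (b - a) (c - 2 * b + a) ha (by linarith)
    refine ⟨a', b', c', hred, fun x y => ?_⟩
    obtain ⟨x', y', h⟩ := hval (x + y) y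
    exact ⟨x', y', h.trans (by unfold binForm; ring)⟩
  by_cases hab' : 2 * b < -a
  · obtain ⟨a', b', c', hred, hval⟩ :=
      exists_isReducedBinForm_of_pos a (b + a) (c + 2 * b + a) ha (by linarith)
    refine ⟨a', b', c', hred, fun x y => ?_⟩
    obtain ⟨x', y', h⟩ := hval (x - y) y
    exact ⟨x', y', h.trans (by unfold binForm; ring)⟩
  rcases le_or_gt 0 b with hb | hb
  · exact ⟨a, b, c, ⟨ha, hb, by omega, by omega⟩, fun x y => ⟨x, y, rfl⟩⟩
  · exact ⟨a, -b, c, ⟨ha, by omega, by omega, by omega⟩,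
      fun x y => ⟨x, -y, by unfold binForm; ring⟩⟩
termination_by (a.toNat, b.natAbs)
decreasing_by
  · exact Prod.Lex.left _ _ (by omega)
  · exact Prod.Lex.right _ (by omega)
  · exact Prod.Lex.right _ (by omega)

theorem IsPDForm.exists_isReducedBinForm_of_representsInt_one {M : Matrix (Fin 3) (Fin 3) ℤ}
    (hM : IsPDForm M) (h1 : RepresentsInt M 1) :
    ∃ a b c, IsReducedBinForm a b c ∧ ∀ n, RepresentsInt M n → OnePerpRepresents a b c n := by
  obtain ⟨a, b, c, ha, hD, hrep⟩ := hM.exists_binForm_of_representsInt_one h1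
  obtain ⟨a', b', c', hred, hval⟩ := exists_isReducedBinForm_of_pos a b c ha hD
  refine ⟨a', b', c', hred, fun n hn => ?_⟩
  obtain ⟨t, x, y, rfl⟩ := hrep n hn
  obtain ⟨x', y', h⟩ := hval x y
  exact ⟨t, x', y', by rw [h]⟩

namespace IsReducedBinForm

variable {a b c n : ℤ}

theorem le_binForm_of_ne_zero (h : IsReducedBinForm a b c) {y : ℤ} (hy : y ≠ 0) (x : ℤ) :
    c ≤ binForm a b c x y := by
  have hY : 1 ≤ |y| := Int.one_le_abs hy
  have hX : 0 ≤ |x| := abs_nonneg x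
  have hxy : -(|x| * |y|) ≤ x * y := by rw [← abs_mul]; exact neg_abs_le _
  have hf : a * |x| ^ 2 - a * (|x| * |y|) + c * |y| ^ 2 ≤ binForm a b c x y := by
    have := mul_le_mul_of_nonneg_left hxy (by linarith [h.nonneg] : (0 : ℤ) ≤ 2 * b)
    have := mul_le_mul_of_nonneg_right h.two_mul_le (mul_nonneg hX (abs_nonneg y))
    rw [binForm, sq_abs, sq_abs]; nlinarith
  have hc : 0 < c := h.pos.trans_le h.le
  -- `f ≥ a|x|(|x| - |y|) + c|y|²`, and also `f ≥ a|x|² + c|y|(|y| - |x|)` since `a ≤ c`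
  rcases le_or_gt |y| |x| with hle | hlt
  · have : c ≤ c * |y| ^ 2 := le_mul_of_one_le_right hc.le (one_le_pow₀ hY)
    nlinarith [mul_nonneg (mul_nonneg h.pos.le hX) (sub_nonneg.2 hle)]
  · have : c ≤ c * |y| * (|y| - |x|) :=
      le_mul_of_one_le_right (by positivity) (by linarith) |>.trans'
        (le_mul_of_one_le_right hc.le hY)
    nlinarith [mul_nonneg (mul_nonneg (sub_nonneg.2 h.le) hX) (abs_nonneg y),
      mul_nonneg h.pos.le (sq_nonneg |x|)]

theorem le_binForm (h : IsReducedBinForm a b c) {x y : ℤ} (hxy : x ≠ 0 ∨ y ≠ 0) :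
    a ≤ binForm a b c x y := by
  rcases eq_or_ne y 0 with rfl | hy
  · have : 1 ≤ x ^ 2 := by
      have := Int.one_le_abs (hxy.resolve_right (by simp)); nlinarith [sq_abs x]
    simp only [binForm]; nlinarith [h.pos]
  · exact h.le.trans (h.le_binForm_of_ne_zero hy x)

theorem three_mul_sq_le_left (h : IsReducedBinForm a b c) (x y : ℤ) :
    3 * x ^ 2 ≤ 4 * binForm a b c x y := by
  have ha := h.pos; have hb := h.nonneg; have hba := h.two_mul_le; have hac := h.le
  have key : c * (4 * binForm a b c x y - 3 * x ^ 2)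
      = (2 * c * y + 2 * b * x) ^ 2 + (4 * a * c - 4 * b ^ 2 - 3 * c) * x ^ 2 := by
    unfold binForm; ring
  have hcoef : 0 ≤ 4 * a * c - 4 * b ^ 2 - 3 * c := by nlinarith
  have : 0 ≤ c * (4 * binForm a b c x y - 3 * x ^ 2) := by rw [key]; positivity
  nlinarith

theorem three_mul_sq_le_right (h : IsReducedBinForm a b c) (x y : ℤ) :
    3 * y ^ 2 ≤ 4 * binForm a b c x y := by
  have ha := h.pos; have hb := h.nonneg; have hba := h.two_mul_le; have hac := h.le
  have key : a * (4 * binForm a b c x y - 3 * y ^ 2)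
      = (2 * a * x + 2 * b * y) ^ 2 + (4 * a * c - 4 * b ^ 2 - 3 * a) * y ^ 2 := by
    unfold binForm; ring
  have hcoef : 0 ≤ 4 * a * c - 4 * b ^ 2 - 3 * a := by nlinarith
  have : 0 ≤ a * (4 * binForm a b c x y - 3 * y ^ 2) := by rw [key]; positivity
  nlinarith

theorem le_of_onePerpRepresents_of_forall_sq_ne (h : IsReducedBinForm a b c)
    (hn : OnePerpRepresents a b c n) (hsq : ∀ t, t ^ 2 ≠ n) : a ≤ n := by
  obtain ⟨t, x, y, rfl⟩ := hn
  by_cases hxy : x = 0 ∧ y = 0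
  · obtain ⟨rfl, rfl⟩ := hxy
    exact absurd (by simp [binForm]) (hsq t)
  · nlinarith [h.le_binForm (x := x) (y := y) (by tauto), sq_nonneg t]

theorem le_of_onePerpRepresents_of_forall_ne (h : IsReducedBinForm a b c)
    (hn : OnePerpRepresents a b c n) (hne : ∀ t x, t ^ 2 + a * x ^ 2 ≠ n) : c ≤ n := by
  obtain ⟨t, x, y, rfl⟩ := hn
  rcases eq_or_ne y 0 with rfl | hy
  · exact absurd (by simp [binForm]) (hne t x)
  · nlinarith [h.le_binForm_of_ne_zero hy x, sq_nonneg t]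

theorem exists_mem_Icc_of_onePerpRepresents (h : IsReducedBinForm a b c)
    (hn : OnePerpRepresents a b c n) {k : ℤ} (hk0 : 0 ≤ k := by norm_num)
    (hk : 4 * n < 3 * (k + 1) ^ 2 := by norm_num) :
    ∃ t ∈ Finset.Icc (-k) k, ∃ x ∈ Finset.Icc (-k) k, ∃ y ∈ Finset.Icc (-k) k,
      t ^ 2 + binForm a b c x y = n := by
  obtain ⟨t, x, y, rfl⟩ := hn
  have hx := h.three_mul_sq_le_left x y
  have hy := h.three_mul_sq_le_right x y
  have hbound : ∀ z : ℤ, z ^ 2 < (k + 1) ^ 2 → z ∈ Finset.Icc (-k) k := fun z hz => by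
    rw [sq_lt_sq, abs_of_nonneg (by linarith : 0 ≤ k + 1), Int.lt_add_one_iff] at hz
    exact Finset.mem_Icc.2 (abs_le.1 hz)
  exact ⟨t, hbound t (by nlinarith [sq_nonneg x]), x, hbound x (by linarith [sq_nonneg t]),
    y, hbound y (by linarith [sq_nonneg t]), rfl⟩

end IsReducedBinForm

theorem Int.sq_ne_two (t : ℤ) : t ^ 2 ≠ 2 := by
  have hmod : ∀ u : ZMod 4, u ^ 2 ≠ 2 := by decide
  intro h
  exact hmod t (by exact_mod_cast congrArg (Int.cast : ℤ → ZMod 4) h)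

theorem Int.sq_add_sq_ne_three (t x : ℤ) : t ^ 2 + x ^ 2 ≠ 3 := by
  have hmod : ∀ u v : ZMod 4, u ^ 2 + v ^ 2 ≠ 3 := by decide
  intro h
  exact hmod t x (by exact_mod_cast congrArg (Int.cast : ℤ → ZMod 4) h)

theorem Int.sq_add_two_mul_sq_ne_five (t x : ℤ) : t ^ 2 + 2 * x ^ 2 ≠ 5 := by
  have hmod : ∀ u v : ZMod 8, u ^ 2 + 2 * v ^ 2 ≠ 5 := by decide
  intro h
  exact hmod t x (by exact_mod_cast congrArg (Int.cast : ℤ → ZMod 8) h)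

theorem IsReducedBinForm.not_onePerpRepresents {a b c : ℤ} (h : IsReducedBinForm a b c)
    (h2 : OnePerpRepresents a b c 2) (h3 : OnePerpRepresents a b c 3)
    (h5 : OnePerpRepresents a b c 5) (h10 : OnePerpRepresents a b c 10)
    (h14 : OnePerpRepresents a b c 14) (h15 : OnePerpRepresents a b c 15) : False := by
  have ha := h.le_of_onePerpRepresents_of_forall_sq_ne h2 Int.sq_ne_two
  have := h.pos; have := h.nonneg; have := h.two_mul_le; have := h.le
  obtain rfl | rfl : a = 1 ∨ a = 2 := by omega
  · obtain rfl : b = 0 := by omega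
    have hc := h.le_of_onePerpRepresents_of_forall_ne h3 (by simpa using Int.sq_add_sq_ne_three)
    interval_cases c
    · exact absurd (h.exists_mem_Icc_of_onePerpRepresents h15 (k := 4)) (by decide)
    · exact absurd (h.exists_mem_Icc_of_onePerpRepresents h14 (k := 4)) (by decide)
    · exact absurd (h.exists_mem_Icc_of_onePerpRepresents h15 (k := 4)) (by decide)
  · have hc := h.le_of_onePerpRepresents_of_forall_ne h5 Int.sq_add_two_mul_sq_ne_five
    obtain rfl | rfl : b = 0 ∨ b = 1 := by omega
    all_goals interval_cases c
    · exact absurd (h.exists_mem_Icc_of_onePerpRepresents h15 (k := 4)) (by decide)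
    · exact absurd (h.exists_mem_Icc_of_onePerpRepresents h10 (k := 3)) (by decide)
    · exact absurd (h.exists_mem_Icc_of_onePerpRepresents h14 (k := 4)) (by decide)
    · exact absurd (h.exists_mem_Icc_of_onePerpRepresents h15 (k := 4)) (by decide)
    · exact absurd (h.exists_mem_Icc_of_onePerpRepresents h5 (k := 2)) (by decide)
    · exact absurd (h.exists_mem_Icc_of_onePerpRepresents h5 (k := 2)) (by decide)
    · exact absurd (h.exists_mem_Icc_of_onePerpRepresents h10 (k := 3)) (by decide)
    · exact absurd (h.exists_mem_Icc_of_onePerpRepresents h15 (k := 4)) (by decide)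

/-- No positive definite integral ternary quadratic form represents
1, 2, 3, 5, 10, 14 and 15 simultaneously. -/
theorem no_ternary_represents_seven :
    ¬ ∃ M : Matrix (Fin 3) (Fin 3) ℤ, IsPDForm M ∧
        RepresentsInt M 1 ∧ RepresentsInt M 2 ∧ RepresentsInt M 3 ∧
        RepresentsInt M 5 ∧ RepresentsInt M 10 ∧ RepresentsInt M 14 ∧
        RepresentsInt M 15 := by
  rintro ⟨M, hM, h1, h2, h3, h5, h10, h14, h15⟩
  obtain ⟨a, b, c, hred, hrep⟩ := hM.exists_isReducedBinForm_of_representsInt_one h1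
  exact hred.not_onePerpRepresents (hrep 2 h2) (hrep 3 h3) (hrep 5 h5) (hrep 10 h10)
    (hrep 14 h14) (hrep 15 h15)
end

section
/- Let ℓ₁ and ℓ₂ be primitive positive definite integral binary quadratic forms such that no positive definite integral binary quadratic form represents both ℓ₁ and ℓ₂. Then the following are equivalent: (i) there exists a positive definite integral ternary quadratic form representing both ℓ₁ and ℓ₂; (ii) there exist a positive integer a and integers b₁, c₁, b₂, c₂ such that ℓ₁ is isometric to the form with matrix (a, b₁; b₁, c₁), ℓ₂ is isometric to the form with matrix (a, b₂; b₂, c₂) (equivalently, a is primitively represented by both ℓ₁ and ℓ₂), and the open real interval ((b₁b₂ − √(det ℓ₁ · det ℓ₂))/a, (b₁b₂ + √(det ℓ₁ · det ℓ₂))/a) contains an integer. -/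
open Matrix

/-- A binary integral form is primitive: no integral lattice properly contains the
corresponding lattice on its rational quadratic space. Concretely, every rational vector v
with vᵀMv ∈ ℤ and Mv ∈ ℤ² is already integral. -/
def IsPrimitiveForm (M : Matrix (Fin 2) (Fin 2) ℤ) : Prop :=
  ∀ v : Fin 2 → ℚ,
    (∃ z : ℤ, v ⬝ᵥ (M.map (Int.cast : ℤ → ℚ)).mulVec v = (z : ℚ)) →
    (∀ i, ∃ z : ℤ, (M.map (Int.cast : ℤ → ℚ)).mulVec v i = (z : ℚ)) →
    ∀ i, ∃ z : ℤ, v i = (z : ℚ)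

/-! If `L` represents `ℓᵢ = Tᵢᵀ L Tᵢ`, the planes spanned by `T₁` and `T₂` in `ℚ³` meet in a
line. Primitivity of `ℓᵢ` forces `Tᵢ ℤ²` to contain every integral vector of its rational
span, so a primitive vector `v` of that line lies in both lattices and extends to bases
`(v, w₁)`, `(v, w₂)` of them; in these bases `ℓᵢ ≅ (a, bᵢ; bᵢ, cᵢ)` with `a = L[v]`. If `w₂` were
rationally dependent on `v, w₁`, the second lattice would lie in the first and `ℓ₁` would
represent `ℓ₂`. Otherwise the Gram matrix `(a, b₁, b₂; b₁, c₁, t; b₂, t, c₂)` of `v, w₁, w₂` is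
positive definite, and completing the square in the first variable shows that this means
`(a t - b₁ b₂)² < det ℓ₁ · det ℓ₂`, i.e. `t` lies in the interval. Conversely, that Gram matrix
built from any such data is a positive definite ternary form containing both `ℓᵢ`. -/

section MatrixAlgebra

variable {R : Type*} [CommSemiring R] {m n : Type*} [Fintype m]

theorem dotProduct_transpose_mul_mul_mulVec [Fintype n] (L : Matrix m m R) (T : Matrix m n R)
    (x y : n → R) : x ⬝ᵥ (Tᵀ * L * T) *ᵥ y = (T *ᵥ x) ⬝ᵥ L *ᵥ (T *ᵥ y) := by
  rw [← mulVec_mulVec, ← mulVec_mulVec, dotProduct_mulVec, vecMul_transpose]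

theorem Matrix.IsSymm.transpose_mul_mul {L : Matrix m m R} (hL : L.IsSymm) (T : Matrix m n R) :
    (Tᵀ * L * T).IsSymm := by
  simp [IsSymm, transpose_mul, hL.eq, Matrix.mul_assoc]

theorem transpose_mul_mul_submatrix {k : Type*} (L : Matrix m m R) (T : Matrix m n R)
    (f : k → n) : (Tᵀ * L * T).submatrix f f = (T.submatrix id f)ᵀ * L * T.submatrix id f := by
  rw [submatrix_mul _ _ _ id _ Function.bijective_id, submatrix_mul _ _ _ id _ Function.bijective_id]
  simp [transpose_submatrix]

theorem col_mul_eq_mulVec {l : Type*} (T : Matrix l m R) (U : Matrix m n R) (j : n) :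
    (T * U).col j = T *ᵥ U.col j := rfl

end MatrixAlgebra

theorem det_fin_two_symm {R : Type*} [CommRing R] (a b c : R) :
    (!![a, b; b, c]).det = a * c - b ^ 2 := by
  rw [det_fin_two_of, sq]

theorem Matrix.IsSymm.exists_eq_fin_three {α : Type*} {G : Matrix (Fin 3) (Fin 3) α}
    (hG : G.IsSymm) : ∃ a b₁ b₂ c₁ t c₂ : α, G = !![a, b₁, b₂; b₁, c₁, t; b₂, t, c₂] :=
  ⟨G 0 0, G 0 1, G 0 2, G 1 1, G 1 2, G 2 2,
    (eta_fin_three G).trans (by rw [hG.apply 0 1, hG.apply 0 2, hG.apply 1 2])⟩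

theorem submatrix_fin_three_zero_one {α : Type*} (a b₁ b₂ c₁ t c₂ : α) :
    (!![a, b₁, b₂; b₁, c₁, t; b₂, t, c₂]).submatrix ![0, 1] ![0, 1] = !![a, b₁; b₁, c₁] := by
  ext i j; fin_cases i <;> fin_cases j <;> rfl

theorem submatrix_fin_three_zero_two {α : Type*} (a b₁ b₂ c₁ t c₂ : α) :
    (!![a, b₁, b₂; b₁, c₁, t; b₂, t, c₂]).submatrix ![0, 2] ![0, 2] = !![a, b₂; b₂, c₂] := by
  ext i j; fin_cases i <;> fin_cases j <;> rfl

section Representations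

variable {n m k : ℕ}

theorem Represents.trans {L : Matrix (Fin n) (Fin n) ℤ} {M : Matrix (Fin m) (Fin m) ℤ}
    {N : Matrix (Fin k) (Fin k) ℤ} (hLM : Represents L M) (hMN : Represents M N) :
    Represents L N := by
  obtain ⟨T, rfl⟩ := hLM
  obtain ⟨S, rfl⟩ := hMN
  exact ⟨T * S, by simp [transpose_mul, Matrix.mul_assoc]⟩

theorem represents_submatrix (L : Matrix (Fin n) (Fin n) ℤ) (f : Fin m → Fin n) :
    Represents L (L.submatrix f f) :=
  ⟨(1 : Matrix (Fin n) (Fin n) ℤ).submatrix id f, by rw [← transpose_mul_mul_submatrix]; simp⟩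

theorem represents_of_forall_col_eq_mulVec (L : Matrix (Fin n) (Fin n) ℤ)
    {T : Matrix (Fin n) (Fin m) ℤ} {S : Matrix (Fin n) (Fin k) ℤ}
    (h : ∀ j, ∃ r, S.col j = T *ᵥ r) : Represents (Tᵀ * L * T) (Sᵀ * L * S) := by
  choose r hr using h
  obtain rfl : S = T * of fun i j => r j i := by ext i j; exact congrFun (hr j) i
  exact ⟨of fun i j => r j i, by simp [transpose_mul, Matrix.mul_assoc]⟩

theorem isomForm_transpose_mul_mul_mul (L : Matrix (Fin n) (Fin n) ℤ)
    (T : Matrix (Fin n) (Fin m) ℤ) {U : Matrix (Fin m) (Fin m) ℤ} (hU : IsUnit U.det) :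
    IsomForm (Tᵀ * L * T) ((T * U)ᵀ * L * (T * U)) :=
  ⟨U, hU, by simp [transpose_mul, Matrix.mul_assoc]⟩

theorem IsomForm.symm {A B : Matrix (Fin n) (Fin n) ℤ} (h : IsomForm A B) : IsomForm B A := by
  obtain ⟨U, hU, rfl⟩ := h
  refine ⟨U⁻¹, isUnit_nonsing_inv_det_iff.2 hU, ?_⟩
  rw [← Matrix.mul_assoc, ← Matrix.mul_assoc, ← transpose_mul, mul_nonsing_inv _ hU,
    Matrix.mul_assoc, mul_nonsing_inv _ hU]
  simp

theorem IsomForm.represents {A B : Matrix (Fin n) (Fin n) ℤ} (h : IsomForm A B) :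
    Represents A B :=
  let ⟨U, _, hU⟩ := h; ⟨U, hU⟩

theorem IsomForm.det_eq {A B : Matrix (Fin n) (Fin n) ℤ} (h : IsomForm A B) : A.det = B.det := by
  obtain ⟨U, hU, rfl⟩ := h
  rcases Int.isUnit_iff.mp hU with h | h <;> simp [det_mul, h]

theorem IsPDForm.eq_zero_of_mulVec_eq_zero {L : Matrix (Fin n) (Fin n) ℤ}
    {T : Matrix (Fin n) (Fin m) ℤ} (h : IsPDForm (Tᵀ * L * T)) {x : Fin m → ℤ}
    (hx : T *ᵥ x = 0) : x = 0 := by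
  by_contra hne
  have := h.2 x hne
  rw [dotProduct_transpose_mul_mul_mulVec, hx] at this
  simp at this

theorem IsPDForm.transpose_mul_mul {L : Matrix (Fin n) (Fin n) ℤ} (hL : IsPDForm L)
    {T : Matrix (Fin n) (Fin m) ℤ} (hT : ∀ x, T *ᵥ x = 0 → x = 0) : IsPDForm (Tᵀ * L * T) :=
  ⟨Matrix.IsSymm.transpose_mul_mul hL.1 T, fun x hx => by
    rw [dotProduct_transpose_mul_mul_mulVec]; exact hL.2 _ (mt (hT x) hx)⟩

theorem IsomForm.isPDForm {A B : Matrix (Fin n) (Fin n) ℤ} (h : IsomForm A B)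
    (hA : IsPDForm A) : IsPDForm B := by
  obtain ⟨U, hU, rfl⟩ := h
  refine hA.transpose_mul_mul fun x hx => ?_
  rw [← one_mulVec x, ← nonsing_inv_mul _ hU, ← mulVec_mulVec, hx, mulVec_zero]

end Representations

section Sylvester

theorem dotProduct_fin_two_mulVec {R : Type*} [CommRing R] (a b c : R) (x : Fin 2 → R) :
    x ⬝ᵥ !![a, b; b, c] *ᵥ x = a * x 0 ^ 2 + 2 * b * x 0 * x 1 + c * x 1 ^ 2 := by
  simp [dotProduct, mulVec, Fin.sum_univ_two]; ring

theorem dotProduct_fin_three_mulVec {R : Type*} [CommRing R] (a b₁ b₂ c₁ t c₂ : R)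
    (x : Fin 3 → R) :
    x ⬝ᵥ !![a, b₁, b₂; b₁, c₁, t; b₂, t, c₂] *ᵥ x =
      a * x 0 ^ 2 + c₁ * x 1 ^ 2 + c₂ * x 2 ^ 2 + 2 * b₁ * x 0 * x 1 + 2 * b₂ * x 0 * x 2
        + 2 * t * x 1 * x 2 := by
  simp [dotProduct, mulVec, Fin.sum_univ_three]; ring

theorem isPDForm_fin_two_iff {a b c : ℤ} :
    IsPDForm !![a, b; b, c] ↔ 0 < a ∧ 0 < a * c - b ^ 2 := by
  have hsymm : (!![a, b; b, c]).IsSymm :=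
    IsSymm.ext fun i j => by fin_cases i <;> fin_cases j <;> rfl
  simp only [IsPDForm, hsymm, true_and, dotProduct_fin_two_mulVec]
  constructor
  · intro h
    have ha : 0 < a := by simpa using h ![1, 0] (by simp)
    have hb := h ![b, -a] (by simp [ha.ne'])
    simp only [Matrix.cons_val_zero, Matrix.cons_val_one] at hb
    exact ⟨ha, pos_of_mul_pos_right (by linear_combination hb) ha.le⟩
  · rintro ⟨ha, hd⟩ x hx
    have key : a * (a * x 0 ^ 2 + 2 * b * x 0 * x 1 + c * x 1 ^ 2) =
        (a * x 0 + b * x 1) ^ 2 + (a * c - b ^ 2) * x 1 ^ 2 := by ring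
    refine pos_of_mul_pos_right (key ▸ ?_) ha.le
    obtain ⟨i, hi⟩ := Function.ne_iff.1 hx
    rcases eq_or_ne (x 1) 0 with h1 | h1
    · have h0 : x 0 ≠ 0 := by fin_cases i <;> simp_all
      simp only [h1]; ring_nf; positivity
    · exact add_pos_of_nonneg_of_pos (sq_nonneg _) (mul_pos hd (by positivity))

theorem isPDForm_fin_three_iff {a b₁ b₂ c₁ t c₂ : ℤ} :
    IsPDForm !![a, b₁, b₂; b₁, c₁, t; b₂, t, c₂] ↔
      0 < a ∧ IsPDForm !![a * c₁ - b₁ ^ 2, a * t - b₁ * b₂; a * t - b₁ * b₂, a * c₂ - b₂ ^ 2] := by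
  have hsymm : (!![a, b₁, b₂; b₁, c₁, t; b₂, t, c₂]).IsSymm :=
    IsSymm.ext fun i j => by fin_cases i <;> fin_cases j <;> rfl
  have hsymmK : (!![a * c₁ - b₁ ^ 2, a * t - b₁ * b₂; a * t - b₁ * b₂, a * c₂ - b₂ ^ 2]).IsSymm :=
    IsSymm.ext fun i j => by fin_cases i <;> fin_cases j <;> rfl
  simp only [IsPDForm, hsymm, hsymmK, true_and, dotProduct_fin_two_mulVec,
    dotProduct_fin_three_mulVec]
  -- completing the square in the first variable leaves the form of the Schur complement
  have key : ∀ p q r : ℤ,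
      a * (a * p ^ 2 + c₁ * q ^ 2 + c₂ * r ^ 2 + 2 * b₁ * p * q + 2 * b₂ * p * r + 2 * t * q * r) =
        (a * p + b₁ * q + b₂ * r) ^ 2 + ((a * c₁ - b₁ ^ 2) * q ^ 2
          + 2 * (a * t - b₁ * b₂) * q * r + (a * c₂ - b₂ ^ 2) * r ^ 2) := by
    intros; ring
  constructor
  · intro h
    have ha : 0 < a := by simpa using h ![1, 0, 0] (by simp)
    refine ⟨ha, fun y hy => ?_⟩
    have hx : (![-(b₁ * y 0 + b₂ * y 1), a * y 0, a * y 1] : Fin 3 → ℤ) ≠ 0 := by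
      obtain ⟨i, hi⟩ := Function.ne_iff.1 hy
      fin_cases i <;> simp_all [ha.ne']
    have hpos := mul_pos ha (h _ hx)
    simp only [Matrix.cons_val_zero, Matrix.cons_val_one, Matrix.cons_val_two, Matrix.tail_cons,
      Matrix.head_cons, key] at hpos
    exact pos_of_mul_pos_right (by linear_combination hpos) (sq_nonneg a)
  · rintro ⟨ha, hK⟩ x hx
    refine pos_of_mul_pos_right ((key _ _ _).symm ▸ ?_) ha.le
    by_cases h12 : x 1 = 0 ∧ x 2 = 0
    · have h0 : x 0 ≠ 0 := by
        obtain ⟨i, hi⟩ := Function.ne_iff.1 hx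
        fin_cases i <;> simp_all
      simp only [h12.1, h12.2]; ring_nf; positivity
    · have := hK ![x 1, x 2] (by simpa [not_and_or] using h12)
      simp only [Matrix.cons_val_zero, Matrix.cons_val_one] at this
      exact add_pos_of_nonneg_of_pos (sq_nonneg _) this

end Sylvester

section Lattices

theorem exists_mulVec_eq_of_smul_eq_mulVec {n : ℕ} {L : Matrix (Fin n) (Fin n) ℤ}
    {T : Matrix (Fin n) (Fin 2) ℤ} (hp : IsPrimitiveForm (Tᵀ * L * T)) {g : ℤ} (hg : g ≠ 0)
    {z : Fin n → ℤ} {x : Fin 2 → ℤ} (h : g • z = T *ᵥ x) : ∃ m, z = T *ᵥ m := by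
  let f := Int.castRingHom ℚ
  have hcast : ∀ {a b : ℕ} (M : Matrix (Fin a) (Fin b) ℤ) (y : Fin b → ℤ),
      M.map f *ᵥ (f ∘ y) = f ∘ (M *ᵥ y) :=
    fun M y => funext fun i => (RingHom.map_mulVec f M y i).symm
  set s : Fin 2 → ℚ := (g : ℚ)⁻¹ • (f ∘ x)
  have hs : T.map f *ᵥ s = f ∘ z := by
    rw [mulVec_smul, hcast, ← h, inv_smul_eq_iff₀ (Int.cast_ne_zero.2 hg)]
    ext i; simp [f]
  have hmap : (Tᵀ * L * T).map f = (T.map f)ᵀ * L.map f * T.map f := by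
    simp [transpose_map]
  obtain ⟨m, hm⟩ : ∃ m : Fin 2 → ℤ, f ∘ m = s := by
    have hint := hp s ⟨z ⬝ᵥ L *ᵥ z, by
      change s ⬝ᵥ (Tᵀ * L * T).map f *ᵥ s = f _
      rw [hmap, dotProduct_transpose_mul_mul_mulVec, hs, hcast, RingHom.map_dotProduct]⟩
      (fun i => ⟨(Tᵀ *ᵥ L *ᵥ z) i, by
        change ((Tᵀ * L * T).map f *ᵥ s) i = f _
        rw [hmap, ← mulVec_mulVec, ← mulVec_mulVec, hs, hcast, ← transpose_map, hcast]; rfl⟩)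
    choose m hm using hint
    exact ⟨m, funext fun i => (hm i).symm⟩
  refine ⟨m, funext fun i => Int.cast_injective (α := ℚ) ?_⟩
  exact congrFun (hs.symm.trans (hm ▸ hcast T m)) i

theorem isCoprime_of_gcd_mulVec_eq_one {n : ℕ} {T : Matrix (Fin n) (Fin 2) ℤ} {m : Fin 2 → ℤ}
    (h : Finset.univ.gcd (T *ᵥ m) = 1) : IsCoprime (m 0) (m 1) := by
  rw [← isRelPrime_iff_isCoprime]
  refine fun d h₀ h₁ => isUnit_of_dvd_one (h ▸ Finset.dvd_gcd fun i _ => ?_)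
  simpa [mulVec, dotProduct, Fin.sum_univ_two] using
    dvd_add (h₀.mul_left (T i 0)) (h₁.mul_left (T i 1))

theorem exists_isUnit_det_col_zero_eq {m : Fin 2 → ℤ} (hm : IsCoprime (m 0) (m 1)) :
    ∃ U : Matrix (Fin 2) (Fin 2) ℤ, IsUnit U.det ∧ U.col 0 = m := by
  obtain ⟨α, β, h⟩ := hm
  refine ⟨!![m 0, -β; m 1, α], ?_, ?_⟩
  · rw [det_fin_two_of, Int.isUnit_iff]
    left; linear_combination h
  · ext i; fin_cases i <;> rfl

theorem exists_coprime_mulVec_eq_mulVec {L : Matrix (Fin 3) (Fin 3) ℤ}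
    {T₁ T₂ : Matrix (Fin 3) (Fin 2) ℤ} (h₁ : IsPDForm (T₁ᵀ * L * T₁))
    (h₂ : IsPDForm (T₂ᵀ * L * T₂)) (hp₁ : IsPrimitiveForm (T₁ᵀ * L * T₁))
    (hp₂ : IsPrimitiveForm (T₂ᵀ * L * T₂)) :
    ∃ m₁ m₂ : Fin 2 → ℤ, IsCoprime (m₁ 0) (m₁ 1) ∧ IsCoprime (m₂ 0) (m₂ 1) ∧
      T₁ *ᵥ m₁ = T₂ *ᵥ m₂ := by
  -- Siegel's lemma, used only for a nonzero integer solution of 3 equations in 4 unknowns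
  obtain ⟨t, ht₀, ht, -⟩ :=
    Int.Matrix.exists_ne_zero_int_vec_norm_le (fromCols T₁ (-T₂)) (by simp) (by simp)
  have hxy : T₁ *ᵥ (t ∘ Sum.inl) = T₂ *ᵥ (t ∘ Sum.inr) := by
    simpa [neg_mulVec, ← sub_eq_add_neg, sub_eq_zero] using ht
  have hz : T₁ *ᵥ (t ∘ Sum.inl) ≠ 0 := fun hz => ht₀ <| by
    have hx := h₁.eq_zero_of_mulVec_eq_zero hz
    have hy := h₂.eq_zero_of_mulVec_eq_zero (hxy ▸ hz)
    ext (i | i)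
    exacts [congrFun hx i, congrFun hy i]
  obtain ⟨v, hv, hgcd⟩ := Finset.extract_gcd (T₁ *ᵥ (t ∘ Sum.inl)) Finset.univ_nonempty
  have hg : Finset.univ.gcd (T₁ *ᵥ (t ∘ Sum.inl)) ≠ 0 :=
    fun h => hz (funext fun i => Finset.gcd_eq_zero_iff.1 h i (Finset.mem_univ i))
  have hgv : Finset.univ.gcd (T₁ *ᵥ (t ∘ Sum.inl)) • v = T₁ *ᵥ (t ∘ Sum.inl) :=
    funext fun i => (hv i (Finset.mem_univ i)).symm
  obtain ⟨m₁, rfl⟩ := exists_mulVec_eq_of_smul_eq_mulVec hp₁ hg hgv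
  obtain ⟨m₂, hm₂⟩ := exists_mulVec_eq_of_smul_eq_mulVec hp₂ hg (hgv.trans hxy)
  exact ⟨m₁, m₂, isCoprime_of_gcd_mulVec_eq_one hgcd,
    isCoprime_of_gcd_mulVec_eq_one (hm₂ ▸ hgcd), hm₂⟩

theorem exists_isPDForm_isomForm_submatrix {L : Matrix (Fin 3) (Fin 3) ℤ} (hL : IsPDForm L)
    {T₁ T₂ : Matrix (Fin 3) (Fin 2) ℤ} (h₁ : IsPDForm (T₁ᵀ * L * T₁))
    (h₂ : IsPDForm (T₂ᵀ * L * T₂)) (hp₁ : IsPrimitiveForm (T₁ᵀ * L * T₁))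
    (hp₂ : IsPrimitiveForm (T₂ᵀ * L * T₂)) (hnr : ¬ Represents (T₁ᵀ * L * T₁) (T₂ᵀ * L * T₂)) :
    ∃ G : Matrix (Fin 3) (Fin 3) ℤ, IsPDForm G ∧
      IsomForm (T₁ᵀ * L * T₁) (G.submatrix ![0, 1] ![0, 1]) ∧
      IsomForm (T₂ᵀ * L * T₂) (G.submatrix ![0, 2] ![0, 2]) := by
  obtain ⟨m₁, m₂, hc₁, hc₂, hm⟩ := exists_coprime_mulVec_eq_mulVec h₁ h₂ hp₁ hp₂
  obtain ⟨U₁, hU₁, hU₁m⟩ := exists_isUnit_det_col_zero_eq hc₁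
  obtain ⟨U₂, hU₂, hU₂m⟩ := exists_isUnit_det_col_zero_eq hc₂
  have hI₁ := isomForm_transpose_mul_mul_mul L T₁ hU₁
  have hI₂ := isomForm_transpose_mul_mul_mul L T₂ hU₂
  have hcol : (T₁ * U₁).col 0 = (T₂ * U₂).col 0 := by
    rw [col_mul_eq_mulVec, col_mul_eq_mulVec, hU₁m, hU₂m, hm]
  -- columns: the common vector and the second vectors of the two adapted bases
  let P : Matrix (Fin 3) (Fin 3) ℤ := of fun i => ![(T₁ * U₁) i 0, (T₁ * U₁) i 1, (T₂ * U₂) i 1]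
  have hP₁ : P.submatrix id ![0, 1] = T₁ * U₁ := by ext i j; fin_cases j <;> rfl
  have hP₂ : P.submatrix id ![0, 2] = T₂ * U₂ := by
    ext i j; fin_cases j; exacts [congrFun hcol i, rfl]
  have hinj : ∀ x, P *ᵥ x = 0 → x = 0 := by
    intro x hPx
    have hPx' : (T₁ * U₁) *ᵥ ![x 0, x 1] + x 2 • (T₂ * U₂).col 1 = 0 := by
      rw [← hPx]; ext i; simp [P, mulVec, dotProduct, Fin.sum_univ_three, Fin.sum_univ_two]; ring
    have hx₂ : x 2 = 0 := by
      by_contra hx₂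
      refine hnr ((represents_of_forall_col_eq_mulVec L (Fin.forall_fin_two.2 ⟨?_, ?_⟩)).trans
        hI₂.symm.represents)
      · exact ⟨U₁.col 0, by rw [← hcol, col_mul_eq_mulVec]⟩
      · refine exists_mulVec_eq_of_smul_eq_mulVec hp₁ hx₂ (x := -(U₁ *ᵥ ![x 0, x 1])) ?_
        rw [mulVec_neg, mulVec_mulVec, eq_neg_iff_add_eq_zero, add_comm, hPx']
    have hx₀₁ := (hI₁.isPDForm h₁).eq_zero_of_mulVec_eq_zero (by simpa [hx₂] using hPx')
    ext i; fin_cases i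
    exacts [congrFun hx₀₁ 0, congrFun hx₀₁ 1, hx₂]
  refine ⟨Pᵀ * L * P, hL.transpose_mul_mul hinj, ?_, ?_⟩
  · rwa [transpose_mul_mul_submatrix, hP₁]
  · rwa [transpose_mul_mul_submatrix, hP₂]

end Lattices

theorem sub_sqrt_div_lt_and_lt_add_sqrt_div_iff {a c D t : ℝ} (ha : 0 < a) :
    (c - √D) / a < t ∧ t < (c + √D) / a ↔ (a * t - c) ^ 2 < D := by
  rw [div_lt_iff₀ ha, lt_div_iff₀ ha, ← sq_abs, ← Real.lt_sqrt (abs_nonneg _), abs_lt]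
  constructor <;> rintro ⟨h₁, h₂⟩ <;> constructor <;> linarith

/-- For primitive binary forms ℓ₁, ℓ₂ whose pair is not buried in rank 2: buried in rank 3
iff some positive integer a is primitively represented by both, in such a way that the open
interval ((b₁b₂ − √(det ℓ₁ det ℓ₂))/a, (b₁b₂ + √(det ℓ₁ det ℓ₂))/a) contains an integer. -/
theorem buried_in_rank_three_iff (ℓ₁ ℓ₂ : Matrix (Fin 2) (Fin 2) ℤ)
    (h₁ : IsPDForm ℓ₁) (h₂ : IsPDForm ℓ₂)
    (hp₁ : IsPrimitiveForm ℓ₁) (hp₂ : IsPrimitiveForm ℓ₂)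
    (hnb : ¬ ∃ L : Matrix (Fin 2) (Fin 2) ℤ, IsPDForm L ∧
        Represents L ℓ₁ ∧ Represents L ℓ₂) :
    (∃ L : Matrix (Fin 3) (Fin 3) ℤ, IsPDForm L ∧ Represents L ℓ₁ ∧ Represents L ℓ₂) ↔
      (∃ (a : ℕ) (b₁ c₁ b₂ c₂ : ℤ), 0 < a ∧
        IsomForm ℓ₁ !![(a : ℤ), b₁; b₁, c₁] ∧
        IsomForm ℓ₂ !![(a : ℤ), b₂; b₂, c₂] ∧
        ∃ t : ℤ,
          ((b₁ * b₂ : ℤ) - Real.sqrt ((ℓ₁.det * ℓ₂.det : ℤ) : ℝ)) / (a : ℝ) < (t : ℝ) ∧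
          (t : ℝ) < ((b₁ * b₂ : ℤ) + Real.sqrt ((ℓ₁.det * ℓ₂.det : ℤ) : ℝ)) / (a : ℝ)) := by
  constructor
  · rintro ⟨L, hL, ⟨T₁, rfl⟩, ⟨T₂, rfl⟩⟩
    obtain ⟨G, hG, hI₁, hI₂⟩ := exists_isPDForm_isomForm_submatrix hL h₁ h₂ hp₁ hp₂
      fun h => hnb ⟨_, h₁, ⟨1, by simp⟩, h⟩
    obtain ⟨a, b₁, b₂, c₁, t, c₂, rfl⟩ := hG.1.exists_eq_fin_three
    rw [submatrix_fin_three_zero_one] at hI₁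
    rw [submatrix_fin_three_zero_two] at hI₂
    rw [isPDForm_fin_three_iff, isPDForm_fin_two_iff] at hG
    obtain ⟨ha, -, hdisc⟩ := hG
    lift a to ℕ using ha.le
    refine ⟨a, b₁, c₁, b₂, c₂, by exact_mod_cast ha, hI₁, hI₂, t, ?_⟩
    rw [hI₁.det_eq, hI₂.det_eq, det_fin_two_symm, det_fin_two_symm,
      sub_sqrt_div_lt_and_lt_add_sqrt_div_iff (by exact_mod_cast ha)]
    exact_mod_cast sub_pos.1 hdisc
  · rintro ⟨a, b₁, c₁, b₂, c₂, ha, hI₁, hI₂, t, ht⟩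
    refine ⟨!![(a : ℤ), b₁, b₂; b₁, c₁, t; b₂, t, c₂], ?_, ?_, ?_⟩
    · rw [isPDForm_fin_three_iff, isPDForm_fin_two_iff]
      rw [hI₁.det_eq, hI₂.det_eq, det_fin_two_symm, det_fin_two_symm,
        sub_sqrt_div_lt_and_lt_add_sqrt_div_iff (by exact_mod_cast ha)] at ht
      exact ⟨by exact_mod_cast ha, (isPDForm_fin_two_iff.1 (hI₁.isPDForm h₁)).2,
        sub_pos.2 (by exact_mod_cast ht)⟩
    · exact (submatrix_fin_three_zero_one .. ▸ represents_submatrix _ _).trans hI₁.symm.represents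
    · exact (submatrix_fin_three_zero_two .. ▸ represents_submatrix _ _).trans hI₂.symm.represents
end
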